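/- arXiv:1907.01175 — 2 statements merged into one kernel-verified Lean document; each statement's English description precedes it below -/
import Mathlib

section
/- Let $\alpha \neq 0$ and let $\beta, \gamma, \nu, \lambda, \omega_L, \omega_1, \omega_2$ be real numbers. Define $\rho_1 = \alpha^{-1}(e^{\alpha}-1)$, $\rho_2 = \alpha^{-2}(e^{\alpha}-1-\alpha)$, $\rho_3 = \alpha^{-3}(e^{\alpha}-1-\alpha-\alpha^2/2)$, and the induced realized-GARCH parameters $\omega^g = \gamma(\rho_1-\rho_2+2\rho_3)\omega_1 - (\rho_1-\gamma\rho_2+2\gamma\rho_3)\omega_2 + (1-\gamma)\{(\rho_2-2\rho_3)\nu + \rho_2\beta\lambda\omega_L\}$, $\alpha^g = (\rho_1-\rho_2+2\gamma\rho_3)\alpha$, $\beta^g = (\rho_1-\rho_2+2\gamma\rho_3)\beta$. Suppose real sequences $(s_n)_{n\ge 0}$, $(I_n)_{n\ge 1}$, $(J_n)_{n\ge 1}$ satisfy $s_n = (\gamma\omega_1-\omega_2) + \gamma s_{n-1} + \alpha I_n + \beta J_n$ for all $n \ge 1$, and define $h_n = (\rho_2-2\rho_3)\nu + \rho_2\beta\lambda\omega_L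 + 2\rho_3\gamma\omega_1 - \rho_2\omega_2 + (\rho_1-\rho_2+2\gamma\rho_3)s_{n-1}$ for $n \ge 1$. Then for every $n \ge 2$, $h_n = \omega^g + \gamma h_{n-1} + \alpha^g I_{n-1} + \beta^g J_{n-1}$. -/
/-- Proposition 2.1(a), algebraic core: the conditional daily integrated
volatility `h n` satisfies the realized-GARCH autoregressive recursion with
integrated volatility `I` and jump variation `J` as innovations. -/
theorem stmt_0
    (α β γ ν lam ωL ω₁ ω₂ : ℝ) (hα : α ≠ 0)
    (ρ₁ ρ₂ ρ₃ ωg αg βg : ℝ)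
    (hρ₁ : ρ₁ = α⁻¹ * (Real.exp α - 1))
    (hρ₂ : ρ₂ = (α⁻¹) ^ 2 * (Real.exp α - 1 - α))
    (hρ₃ : ρ₃ = (α⁻¹) ^ 3 * (Real.exp α - 1 - α - α ^ 2 / 2))
    (hωg : ωg = γ * (ρ₁ - ρ₂ + 2 * ρ₃) * ω₁ - (ρ₁ - γ * ρ₂ + 2 * γ * ρ₃) * ω₂
        + (1 - γ) * ((ρ₂ - 2 * ρ₃) * ν + ρ₂ * β * lam * ωL))
    (hαg : αg = (ρ₁ - ρ₂ + 2 * γ * ρ₃) * α)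
    (hβg : βg = (ρ₁ - ρ₂ + 2 * γ * ρ₃) * β)
    (s I J h : ℕ → ℝ)
    (hs : ∀ n : ℕ, 1 ≤ n →
      s n = (γ * ω₁ - ω₂) + γ * s (n - 1) + α * I n + β * J n)
    (hh : ∀ n : ℕ, 1 ≤ n →
      h n = (ρ₂ - 2 * ρ₃) * ν + ρ₂ * β * lam * ωL + 2 * ρ₃ * γ * ω₁ - ρ₂ * ω₂
        + (ρ₁ - ρ₂ + 2 * γ * ρ₃) * s (n - 1)) :
    ∀ n : ℕ, 2 ≤ n →
      h n = ωg + γ * h (n - 1) + αg * I (n - 1) + βg * J (n - 1) := by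
  rintro n hn
  obtain ⟨m, rfl⟩ : ∃ m, n = m + 2 := ⟨n - 2, by omega⟩
  have h1 := hh (m + 2) (by omega)
  have h2 := hh (m + 1) (by omega)
  have h3 := hs (m + 1) (by omega)
  simp only [show m + 2 - 1 = m + 1 from rfl, Nat.add_sub_cancel] at *
  rw [h1, h2, h3, hωg, hαg, hβg]
  ring
end

section
/- Fix positive reals $\omega^g, \alpha^g, \beta^g, \gamma$ with $\alpha^g + \gamma < 1$, nonnegative reals $\lambda, \omega_L$, and nonnegative real sequences $(x_l)_{l \ge 1}$ and $(y_l)_{l \ge 1}$. Define $h_1 = (\omega^g + \beta^g \lambda \omega_L)/(1 - \alpha^g - \gamma)$ and, for integers $i \ge 2$, $\hat h_i = \sum_{l=1}^{i-1} \gamma^{l-1} (\omega^g + \alpha^g x_{i-l} + \beta^g y_{i-l}) + \gamma^{i-1} h_1$. For $i \ge 1$ define $D_i^{\omega} = \sum_{l=1}^{i-1} \gamma^{l-1} + \frac{\gamma^{i-1}}{1-\alpha^g-\gamma}$, $D_i^{\alpha} = \sum_{l=1}^{i-1} \gamma^{l-1} x_{i-l} + \frac{\gamma^{i-1} h_1}{1-\alpha^g-\gamma}$,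 and $D_i^{\beta} = \sum_{l=1}^{i-1} \gamma^{l-1} y_{i-l} + \frac{\gamma^{i-1} \lambda \omega_L}{1-\alpha^g-\gamma}$ (these are the partial derivatives of $\hat h_i$ with respect to $\omega^g$, $\alpha^g$, and $\beta^g$, respectively). Then for every $i \ge 1$: $\omega^g D_i^{\omega} \le \hat h_i$, $\beta^g D_i^{\beta} \le \hat h_i$, and $\alpha^g D_i^{\alpha} \le \max\left\{1, \frac{\alpha^g}{1-\alpha^g-\gamma}\right\} \hat h_i$. -/
/-- Deterministic ratio bounds of Lemma A.1(b): the partial derivatives of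
the estimated realized GARCH volatility `ĥᵢ` with respect to `ωᵍ`, `αᵍ`, `βᵍ`
are controlled by `ĥᵢ` itself, uniformly in `i`. -/
theorem stmt_12
    (ωg αg βg γ : ℝ)
    (hωg : 0 < ωg) (hαg : 0 < αg) (hβg : 0 < βg) (hγ : 0 < γ)
    (hsum : αg + γ < 1)
    (lam ωL : ℝ) (hlam : 0 ≤ lam) (hωL : 0 ≤ ωL)
    (x y : ℕ → ℝ) (hx : ∀ l, 0 ≤ x l) (hy : ∀ l, 0 ≤ y l)
    (hhat Dω Dα Dβ : ℕ → ℝ)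
    (h_one : hhat 1 = (ωg + βg * lam * ωL) / (1 - αg - γ))
    (h_rec : ∀ i : ℕ, 2 ≤ i →
      hhat i = (∑ l ∈ Finset.Icc 1 (i - 1),
          γ ^ (l - 1) * (ωg + αg * x (i - l) + βg * y (i - l)))
        + γ ^ (i - 1) * hhat 1)
    (hDω : ∀ i : ℕ, 1 ≤ i →
      Dω i = (∑ l ∈ Finset.Icc 1 (i - 1), γ ^ (l - 1))
        + γ ^ (i - 1) / (1 - αg - γ))
    (hDα : ∀ i : ℕ, 1 ≤ i →
      Dα i = (∑ l ∈ Finset.Icc 1 (i - 1), γ ^ (l - 1) * x (i - l))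
        + γ ^ (i - 1) * hhat 1 / (1 - αg - γ))
    (hDβ : ∀ i : ℕ, 1 ≤ i →
      Dβ i = (∑ l ∈ Finset.Icc 1 (i - 1), γ ^ (l - 1) * y (i - l))
        + γ ^ (i - 1) * (lam * ωL) / (1 - αg - γ)) :
    ∀ i : ℕ, 1 ≤ i →
      ωg * Dω i ≤ hhat i
      ∧ βg * Dβ i ≤ hhat i
      ∧ αg * Dα i ≤ max 1 (αg / (1 - αg - γ)) * hhat i := by
  have hpos : (0:ℝ) < 1 - αg - γ := by linarith
  have h1nn : 0 ≤ hhat 1 := by rw [h_one]; positivity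
  have hh : ∀ i : ℕ, 1 ≤ i → hhat i
      = (∑ l ∈ Finset.Icc 1 (i - 1),
          γ ^ (l - 1) * (ωg + αg * x (i - l) + βg * y (i - l)))
        + γ ^ (i - 1) * hhat 1 := by
    intro i hi
    rcases eq_or_lt_of_le hi with h | h
    · simp [← h]
    · exact h_rec i h
  intro i hi
  rw [hh i hi, hDω i hi, hDα i hi, hDβ i hi]
  have hγp : (0:ℝ) ≤ γ ^ (i - 1) := by positivity
  have hM1 : (1:ℝ) ≤ max 1 (αg / (1 - αg - γ)) := le_max_left _ _
  have hM2 : αg / (1 - αg - γ) ≤ max 1 (αg / (1 - αg - γ)) := le_max_right _ _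
  have hsumnn : ∀ l : ℕ, 0 ≤ ωg + αg * x (i - l) + βg * y (i - l) := by
    intro l
    have h1 := mul_nonneg hαg.le (hx (i - l))
    have h2 := mul_nonneg hβg.le (hy (i - l))
    linarith
  refine ⟨?_, ?_, ?_⟩
  · rw [mul_add, Finset.mul_sum]
    apply add_le_add
    · apply Finset.sum_le_sum
      intro l hl
      have hγl : (0:ℝ) ≤ γ ^ (l - 1) := by positivity
      have h1 := mul_nonneg hαg.le (hx (i - l))
      have h2 := mul_nonneg hβg.le (hy (i - l))
      rw [mul_comm]
      exact mul_le_mul_of_nonneg_left (by linarith) hγl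
    · rw [h_one]
      calc ωg * (γ ^ (i - 1) / (1 - αg - γ))
          = γ ^ (i - 1) * ωg / (1 - αg - γ) := by ring
        _ ≤ γ ^ (i - 1) * (ωg + βg * lam * ωL) / (1 - αg - γ) := by
            gcongr
            nlinarith [mul_nonneg (mul_nonneg hβg.le hlam) hωL]
        _ = γ ^ (i - 1) * ((ωg + βg * lam * ωL) / (1 - αg - γ)) := by ring
  · rw [mul_add, Finset.mul_sum]
    apply add_le_add
    · apply Finset.sum_le_sum
      intro l hl
      have hγl : (0:ℝ) ≤ γ ^ (l - 1) := by positivity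
      have h1 := mul_nonneg hαg.le (hx (i - l))
      calc βg * (γ ^ (l - 1) * y (i - l))
          = γ ^ (l - 1) * (βg * y (i - l)) := by ring
        _ ≤ γ ^ (l - 1) * (ωg + αg * x (i - l) + βg * y (i - l)) :=
            mul_le_mul_of_nonneg_left (by linarith) hγl
    · rw [h_one]
      calc βg * (γ ^ (i - 1) * (lam * ωL) / (1 - αg - γ))
          = γ ^ (i - 1) * (βg * lam * ωL) / (1 - αg - γ) := by ring
        _ ≤ γ ^ (i - 1) * (ωg + βg * lam * ωL) / (1 - αg - γ) := by
            gcongr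
            linarith
        _ = γ ^ (i - 1) * ((ωg + βg * lam * ωL) / (1 - αg - γ)) := by ring
  · rw [mul_add, mul_add, Finset.mul_sum, Finset.mul_sum]
    apply add_le_add
    · apply Finset.sum_le_sum
      intro l hl
      have hγl : (0:ℝ) ≤ γ ^ (l - 1) := by positivity
      have h1 := mul_nonneg hβg.le (hy (i - l))
      calc αg * (γ ^ (l - 1) * x (i - l))
          = 1 * (γ ^ (l - 1) * (αg * x (i - l))) := by ring
        _ ≤ 1 * (γ ^ (l - 1) * (ωg + αg * x (i - l) + βg * y (i - l))) := by
            rw [one_mul, one_mul]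
            exact mul_le_mul_of_nonneg_left (by linarith) hγl
        _ ≤ max 1 (αg / (1 - αg - γ)) * (γ ^ (l - 1) * (ωg + αg * x (i - l) + βg * y (i - l))) :=
            mul_le_mul_of_nonneg_right hM1 (mul_nonneg hγl (hsumnn l))
    · calc αg * (γ ^ (i - 1) * hhat 1 / (1 - αg - γ))
          = (αg / (1 - αg - γ)) * (γ ^ (i - 1) * hhat 1) := by ring
        _ ≤ max 1 (αg / (1 - αg - γ)) * (γ ^ (i - 1) * hhat 1) :=
            mul_le_mul_of_nonneg_right hM2 (mul_nonneg hγp h1nn)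
end
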